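/- Let X be a Banach space and Y a closed subspace. If the pair (X*, Y^⊥) has the π_λ-property, then for every finite-dimensional subspace F ⊆ X* and every ε > 0 there exists a finite-rank bounded projection P : X → X with P(Y) ⊆ Y, ‖P‖ ≤ λ + ε, and P* x* = x* for all x* ∈ F. -/

import Mathlib

open NormedSpace

/-- The Banach-space adjoint (dual map) of a continuous linear map. -/
noncomputable def dualOp {X Y : Type*} [NormedAddCommGroup X] [NormedSpace ℝ X]
    [NormedAddCommGroup Y] [NormedSpace ℝ Y] (T : X →L[ℝ] Y) :
    StrongDual ℝ Y →L[ℝ] StrongDual ℝ X :=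
  (ContinuousLinearMap.compSL X Y ℝ (RingHom.id ℝ) (RingHom.id ℝ)).flip T

/-- The annihilator of a subspace in the continuous dual. -/
noncomputable def ann {X : Type*} [NormedAddCommGroup X] [NormedSpace ℝ X]
    (U : Submodule ℝ X) : Submodule ℝ (StrongDual ℝ X) where
  carrier := {f | ∀ u ∈ U, f u = 0}
  zero_mem' := by intro u hu; simp
  add_mem' := by intro f g hf hg u hu; simp [hf u hu, hg u hu]
  smul_mem' := by intro c f hf u hu; simp [hf u hu]

/-- A continuous linear map has finite rank. -/
def FinRank {X Y : Type*} [NormedAddCommGroup X] [NormedSpace ℝ X]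
    [NormedAddCommGroup Y] [NormedSpace ℝ Y] (T : X →L[ℝ] Y) : Prop :=
  FiniteDimensional ℝ (LinearMap.range (T : X →ₗ[ℝ] Y))

/-- The pair `(Z, W)` has the `λ`-bounded approximation property. -/
def HasBAPPair (lam : ℝ) {Z : Type*} [NormedAddCommGroup Z] [NormedSpace ℝ Z]
    (W : Submodule ℝ Z) : Prop :=
  ∀ E : Submodule ℝ Z, FiniteDimensional ℝ E → ∀ ε : ℝ, 0 < ε →
    ∃ S : Z →L[ℝ] Z, FinRank S ∧ (∀ w ∈ W, S w ∈ W) ∧ ‖S‖ ≤ lam + ε ∧ ∀ z ∈ E, S z = z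

/-- The pair `(Z, W)` has the `π_λ`-property. -/
def HasPiPair (lam : ℝ) {Z : Type*} [NormedAddCommGroup Z] [NormedSpace ℝ Z]
    (W : Submodule ℝ Z) : Prop :=
  ∀ E : Submodule ℝ Z, FiniteDimensional ℝ E → ∀ ε : ℝ, 0 < ε →
    ∃ P : Z →L[ℝ] Z, FinRank P ∧ (∀ z, P (P z) = P z) ∧ (∀ w ∈ W, P w ∈ W) ∧
      ‖P‖ ≤ lam + ε ∧ ∀ z ∈ E, P z = z

/-- The pair `(Z, W)` has the `π_λ`-duality property. -/
def HasPiDualPair (lam : ℝ) {Z : Type*} [NormedAddCommGroup Z] [NormedSpace ℝ Z]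
    (W : Submodule ℝ Z) : Prop :=
  ∀ E : Submodule ℝ Z, FiniteDimensional ℝ E →
    ∀ F : Submodule ℝ (StrongDual ℝ Z), FiniteDimensional ℝ F → ∀ ε : ℝ, 0 < ε →
      ∃ P : Z →L[ℝ] Z, FinRank P ∧ (∀ z, P (P z) = P z) ∧ (∀ w ∈ W, P w ∈ W) ∧
        ‖P‖ ≤ lam + ε ∧ (∀ z ∈ E, P z = z) ∧ ∀ f ∈ F, dualOp P f = f


/-!
The `π_λ`-property of `(X*, Y^⊥)` gives a projection `Q` on `X*` with `Q(Y^⊥) ⊆ Y^⊥`,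
`‖Q‖ ≤ λ + ε/2`, fixing `F`. Expand `Q = ∑ φᵢ ⊗ gᵢ` in a basis `(gᵢ)` of `range Q` extending a
basis of `range Q ∩ Y^⊥`; then `φᵢ` vanishes on `Y^⊥` whenever `gᵢ ∉ Y^⊥`, and `∑ gᵢ ⊗ φᵢ : X → X**`
is `Q*` restricted to `X`, of norm at most `‖Q‖`. Local reflexivity replaces each `φᵢ ∈ X**` by
some `xᵢ ∈ X`, lying in `Y` whenever `gᵢ ∉ Y^⊥`, with `f(xᵢ) = φᵢ(f)` on `range Q + F`, at a cost
of `ε/2` in norm. Then `P = ∑ gᵢ ⊗ xᵢ` satisfies `P* = Q` on `range Q + F`, which makes it a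
projection whose adjoint fixes `F`, and `P(Y) ⊆ Y`.

For local reflexivity, a finite net of the unit ball reduces `‖∑ gᵢ ⊗ xᵢ‖` to its values at
finitely many points, so the admissible `(xᵢ)` form a convex set `K` in a power of `X`. If the
point `(φᵢ(f_j))` were not in the closure of the image of `K` in the finite-dimensional space of
values `(f_j(xᵢ))`, a separating functional, extended by Hahn–Banach to the sampled power `X^t`
(whose dual is an `ℓ¹`-sum of copies of `X*`), would pair with `(φᵢ)` to more than
`‖∑ gᵢ ⊗ φᵢ‖` times its norm, which is impossible. Finite dimensionality of the value space turns
approximate solutions into exact ones.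
-/

section FiniteRankOperators

variable {X Z : Type*} [NormedAddCommGroup X] [NormedSpace ℝ X]
  [NormedAddCommGroup Z] [NormedSpace ℝ Z] {ι Λ : Type*} [Fintype ι]

noncomputable def sumSmulRight (g : ι → StrongDual ℝ X) (ξ : ι → Z) : X →L[ℝ] Z :=
  ∑ i, (g i).smulRight (ξ i)

@[simp]
lemma sumSmulRight_apply (g : ι → StrongDual ℝ X) (ξ : ι → Z) (v : X) :
    sumSmulRight g ξ v = ∑ i, g i v • ξ i := by
  simp [sumSmulRight]

lemma finRank_sumSmulRight (g : ι → StrongDual ℝ X) (ξ : ι → Z) : FinRank (sumSmulRight g ξ) := by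
  have := FiniteDimensional.span_of_finite ℝ (Set.finite_range ξ)
  refine Submodule.finiteDimensional_of_le (S₂ := Submodule.span ℝ (Set.range ξ)) ?_
  rintro _ ⟨v, rfl⟩
  simpa using Submodule.sum_mem _ fun i _ =>
    Submodule.smul_mem _ (g i v) (Submodule.subset_span (Set.mem_range_self i))

lemma dualOp_sumSmulRight_apply (g : ι → StrongDual ℝ X) (x : ι → X) (f : StrongDual ℝ X) :
    dualOp (sumSmulRight g x) f = ∑ i, f (x i) • g i := by
  ext v
  simp [dualOp, mul_comm]

lemma sumSmulRight_idem {g : ι → StrongDual ℝ X} {x : ι → X}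
    (h : ∀ i v, g i (sumSmulRight g x v) = g i v) (v : X) :
    sumSmulRight g x (sumSmulRight g x v) = sumSmulRight g x v := by
  simp only [sumSmulRight_apply g x (sumSmulRight g x v), h]
  exact (sumSmulRight_apply g x v).symm

lemma sumSmulRight_mem {Y : Submodule ℝ X} {g : ι → StrongDual ℝ X} {x : ι → X}
    (hx : ∀ i, g i ∈ ann Y ∨ x i ∈ Y) {y : X} (hy : y ∈ Y) : sumSmulRight g x y ∈ Y := by
  rw [sumSmulRight_apply]
  refine Y.sum_mem fun i _ => (hx i).elim (fun hgi => ?_) (Y.smul_mem _)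
  simp [hgi y hy]

noncomputable def sumSmulRightAt (g : ι → StrongDual ℝ X) (w : Λ → X) : (ι → Z) →L[ℝ] (Λ → Z) :=
  ContinuousLinearMap.pi fun k => ∑ i, g i (w k) • ContinuousLinearMap.proj i

@[simp]
lemma sumSmulRightAt_apply (g : ι → StrongDual ℝ X) (w : Λ → X) (ξ : ι → Z) (k : Λ) :
    sumSmulRightAt g w ξ k = sumSmulRight g ξ (w k) := by
  simp [sumSmulRightAt]

lemma norm_sumSmulRightAt_le [Fintype Λ] (g : ι → StrongDual ℝ X) {w : Λ → X} (hw : ∀ k, ‖w k‖ ≤ 1)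
    (ξ : ι → Z) : ‖sumSmulRightAt g w ξ‖ ≤ ‖sumSmulRight g ξ‖ :=
  (pi_norm_le_iff_of_nonneg (norm_nonneg _)).2 fun k => by
    rw [sumSmulRightAt_apply]
    exact (sumSmulRight g ξ).le_opNorm_of_le (hw k) |>.trans_eq (mul_one _)

end FiniteRankOperators

section PiDualPairing

variable {X : Type*} [NormedAddCommGroup X] [NormedSpace ℝ X]
  {ι Λ : Type*} [Fintype ι] [DecidableEq ι] [Fintype Λ] [DecidableEq Λ]

noncomputable def piDualPairing (φ : ι → StrongDual ℝ (StrongDual ℝ X))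
    (ℓ : StrongDual ℝ (ι → X)) : ℝ :=
  ∑ i, φ i (ℓ.comp (ContinuousLinearMap.single ℝ (fun _ => X) i))

lemma exists_norm_le_one_lt_apply (f : StrongDual ℝ X) {r : ℝ} (hr : r < ‖f‖) :
    ∃ x : X, ‖x‖ ≤ 1 ∧ r < f x := by
  obtain ⟨x, hx, hrx⟩ := f.exists_lt_apply_of_lt_opNorm hr
  rcases le_or_gt 0 (f x) with hpos | hneg
  · exact ⟨x, hx.le, by rwa [Real.norm_of_nonneg hpos] at hrx⟩
  · refine ⟨-x, by rw [norm_neg]; exact hx.le, ?_⟩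
    rwa [Real.norm_of_nonpos hneg.le, ← map_neg] at hrx

lemma sum_norm_comp_single_le (U : StrongDual ℝ (Λ → X)) :
    ∑ k, ‖U.comp (ContinuousLinearMap.single ℝ (fun _ => X) k)‖ ≤ ‖U‖ := by
  set u := fun k => U.comp (ContinuousLinearMap.single ℝ (fun _ => X) k)
  refine le_of_forall_pos_le_add fun η hη => ?_
  have hη' : 0 < η / (Fintype.card Λ + 1) := by positivity
  choose x hx1 hx using fun k => exists_norm_le_one_lt_apply (u k) (sub_lt_self ‖u k‖ hη')
  have hU : U x = ∑ k, u k (x k) := by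
    conv_lhs => rw [← Finset.univ_sum_single x]
    simp [u]
  have hxU : U x ≤ ‖U‖ := (le_abs_self _).trans <|
    (U.le_opNorm_of_le ((pi_norm_le_iff_of_nonneg zero_le_one).2 hx1)).trans_eq (mul_one _)
  have hcard : (Fintype.card Λ : ℝ) * (η / (Fintype.card Λ + 1)) ≤ η := by
    rw [mul_div_assoc', div_le_iff₀ (by positivity)]
    nlinarith
  have := Finset.sum_le_sum fun k (_ : k ∈ Finset.univ) => (hx k).le
  simp only [Finset.sum_sub_distrib, Finset.sum_const, Finset.card_univ, nsmul_eq_mul] at this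
  linarith

lemma piDualPairing_le (ψ : Λ → StrongDual ℝ (StrongDual ℝ X)) (U : StrongDual ℝ (Λ → X)) :
    piDualPairing ψ U ≤ ‖ψ‖ * ‖U‖ :=
  calc piDualPairing ψ U
      ≤ ∑ k, ‖ψ k‖ * ‖U.comp (ContinuousLinearMap.single ℝ (fun _ => X) k)‖ :=
        Finset.sum_le_sum fun k _ => (le_abs_self _).trans ((ψ k).le_opNorm _)
    _ ≤ ∑ k, ‖ψ‖ * ‖U.comp (ContinuousLinearMap.single ℝ (fun _ => X) k)‖ :=
        Finset.sum_le_sum fun k _ =>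
          mul_le_mul_of_nonneg_right (norm_le_pi_norm ψ k) (norm_nonneg _)
    _ ≤ ‖ψ‖ * ‖U‖ := by
        rw [← Finset.mul_sum]
        exact mul_le_mul_of_nonneg_left (sum_norm_comp_single_le U) (norm_nonneg _)

lemma piDualPairing_congr {V : ι → Submodule ℝ X} {φ : ι → StrongDual ℝ (StrongDual ℝ X)}
    (hφ : ∀ i, ∀ f ∈ ann (V i), φ i f = 0) {ℓ ℓ' : StrongDual ℝ (ι → X)}
    (h : ∀ ξ ∈ Submodule.pi Set.univ V, ℓ ξ = ℓ' ξ) :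
    piDualPairing φ ℓ = piDualPairing φ ℓ' := by
  refine Finset.sum_congr rfl fun i _ => ?_
  rw [← sub_eq_zero, ← map_sub]
  refine hφ i _ fun v hv => ?_
  have hmem : Pi.single i v ∈ Submodule.pi Set.univ V := by
    refine Submodule.mem_pi.2 fun j _ => ?_
    rcases eq_or_ne j i with rfl | hji
    · simpa using hv
    · simp [hji]
  simpa [sub_eq_zero] using h _ hmem

lemma piDualPairing_comp_sumSmulRightAt (g : ι → StrongDual ℝ X) (w : Λ → X)
    (φ : ι → StrongDual ℝ (StrongDual ℝ X)) (U : StrongDual ℝ (Λ → X)) :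
    piDualPairing φ (U.comp (sumSmulRightAt g w)) = piDualPairing (sumSmulRightAt g w φ) U := by
  have hcomp : ∀ i,
      (U.comp (sumSmulRightAt g w)).comp (ContinuousLinearMap.single ℝ (fun _ => X) i) =
        ∑ k, g i (w k) • U.comp (ContinuousLinearMap.single ℝ (fun _ => X) k) := by
    intro i
    ext x
    have hsingle : sumSmulRightAt g w (Pi.single i x) = ∑ k, Pi.single k (g i (w k) • x) := by
      ext k
      simp [Pi.single_apply]
    simp only [ContinuousLinearMap.comp_apply, ContinuousLinearMap.single_apply, hsingle, map_sum,
      Pi.single_smul', map_smul, FunLike.coe_sum, Finset.sum_apply, FunLike.coe_smul, Pi.smul_apply]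
  simp only [piDualPairing, hcomp, map_sum, map_smul, smul_eq_mul, sumSmulRightAt_apply,
    sumSmulRight_apply, FunLike.coe_sum, Finset.sum_apply, FunLike.coe_smul, Pi.smul_apply]
  exact Finset.sum_comm

lemma apply_eq_piDualPairing {J : Type*} [Fintype J] [DecidableEq J]
    (φ : ι → StrongDual ℝ (StrongDual ℝ X)) (f : J → StrongDual ℝ X)
    (ψ : StrongDual ℝ (ι → J → ℝ)) :
    ψ (fun i j => φ i (f j)) =
      piDualPairing φ (ψ.comp (ContinuousLinearMap.piMap fun _ => ContinuousLinearMap.pi f)) := by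
  have hψ : ∀ q : ι → J → ℝ, ψ q = ∑ i, ∑ j, q i j * ψ (Pi.single i (Pi.single j 1)) := by
    intro q
    have hq : q = ∑ i, ∑ j, q i j • Pi.single i (Pi.single j 1) := by
      ext i j
      simp [Pi.single_apply, ite_apply, Finset.sum_apply]
    conv_lhs => rw [hq]
    simp only [map_sum, map_smul, smul_eq_mul]
  have hcomp : ∀ i, (ψ.comp (ContinuousLinearMap.piMap fun _ => ContinuousLinearMap.pi f)).comp
      (ContinuousLinearMap.single ℝ (fun _ => X) i) =
        ∑ j, ψ (Pi.single i (Pi.single j 1)) • f j := by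
    intro i
    ext x
    rw [ContinuousLinearMap.comp_apply, ContinuousLinearMap.comp_apply, hψ]
    simp [Pi.single_apply, apply_ite, mul_comm]
  simp only [piDualPairing, hcomp, map_sum, map_smul, smul_eq_mul]
  rw [hψ, Finset.sum_congr rfl fun i _ => Finset.sum_congr rfl fun j _ => mul_comm _ _]

end PiDualPairing

section Extension

variable {E F : Type*} [NormedAddCommGroup E] [NormedSpace ℝ E]
  [NormedAddCommGroup F] [NormedSpace ℝ F]

lemma exists_norm_le_comp_eq (A : E →L[ℝ] F) (𝒴 : Submodule ℝ E) (ℓ : StrongDual ℝ E) {S : ℝ}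
    (hS0 : 0 ≤ S) (hS : ∀ ξ ∈ 𝒴, ℓ ξ ≤ S * ‖A ξ‖) :
    ∃ U : StrongDual ℝ F, ‖U‖ ≤ S ∧ ∀ ξ ∈ 𝒴, U (A ξ) = ℓ ξ := by
  have habs : ∀ ξ ∈ 𝒴, |ℓ ξ| ≤ S * ‖A ξ‖ := fun ξ hξ =>
    abs_le.2 ⟨by linarith [show -ℓ ξ ≤ S * ‖A ξ‖ by simpa using hS (-ξ) (neg_mem hξ)], hS ξ hξ⟩
  obtain ⟨h, hh⟩ : ∃ h : F →ₗ[ℝ] ℝ, ∀ ξ ∈ 𝒴, h (A ξ) = ℓ ξ := by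
    have hker : (ℓ : E →ₗ[ℝ] ℝ) ∘ₗ 𝒴.subtype ∈
        (LinearMap.ker ((A : E →ₗ[ℝ] F) ∘ₗ 𝒴.subtype)).dualAnnihilator := by
      refine (Submodule.mem_dualAnnihilator _).2 fun ξ hξ => ?_
      have hAξ : A ξ = 0 := LinearMap.mem_ker.1 hξ
      simpa [hAξ] using habs ξ ξ.2
    rw [← LinearMap.range_dualMap_eq_dualAnnihilator_ker] at hker
    obtain ⟨h, hh⟩ := hker
    exact ⟨h, fun ξ hξ => LinearMap.congr_fun hh ⟨ξ, hξ⟩⟩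
  let D := 𝒴.map (A : E →ₗ[ℝ] F)
  have hD : ∀ ζ : D, ‖(h ∘ₗ D.subtype) ζ‖ ≤ S * ‖ζ‖ := by
    rintro ⟨_, ξ, hξ, rfl⟩
    simpa [hh ξ hξ] using habs ξ hξ
  obtain ⟨U, hU, hUn⟩ := exists_extension_norm_eq D ((h ∘ₗ D.subtype).mkContinuous S hD)
  refine ⟨U, hUn ▸ LinearMap.mkContinuous_norm_le _ hS0 _, fun ξ hξ => ?_⟩
  exact (hU ⟨A ξ, ξ, hξ, rfl⟩).trans (hh ξ hξ)

end Extension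

section Closure

variable {E F P : Type*} [NormedAddCommGroup E] [NormedSpace ℝ E]
  [NormedAddCommGroup F] [NormedSpace ℝ F] [NormedAddCommGroup P] [NormedSpace ℝ P]

lemma le_div_mul_norm_of_lt (A : E →L[ℝ] F) (𝒴 : Submodule ℝ E) (ℓ : StrongDual ℝ E) {r u : ℝ}
    (hr : 0 < r) (h : ∀ ξ ∈ 𝒴, ‖A ξ‖ ≤ r → ℓ ξ < u) : ∀ ξ ∈ 𝒴, ℓ ξ ≤ u / r * ‖A ξ‖ := by
  intro ξ hξ
  rcases (norm_nonneg (A ξ)).eq_or_lt with h0 | hpos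
  · rw [← h0, mul_zero]
    by_contra! hℓ
    have hAξ : A ξ = 0 := norm_eq_zero.1 h0.symm
    have := h ((u / ℓ ξ) • ξ) (𝒴.smul_mem _ hξ) (by simp [hAξ, hr.le])
    rw [map_smul, smul_eq_mul, div_mul_cancel₀ _ hℓ.ne'] at this
    exact lt_irrefl _ this
  · have := h ((r / ‖A ξ‖) • ξ) (𝒴.smul_mem _ hξ) (by
      rw [map_smul, norm_smul, Real.norm_of_nonneg (by positivity), div_mul_cancel₀ _ hpos.ne'])
    rw [map_smul, smul_eq_mul, div_mul_eq_mul_div, div_lt_iff₀ hpos] at this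
    rw [div_mul_eq_mul_div, le_div_iff₀ hr]
    linarith

lemma exists_preimage_norm_le_of_finiteDimensional [FiniteDimensional ℝ F] (κ : E →L[ℝ] F) :
    ∃ C, 0 ≤ C ∧ ∀ u : E, ∃ u', κ u' = κ u ∧ ‖u'‖ ≤ C * ‖κ u‖ := by
  set κ' := (κ : E →ₗ[ℝ] F).rangeRestrict
  obtain ⟨R, hR⟩ := κ'.exists_rightInverse_of_surjective (LinearMap.range_rangeRestrict _)
  let Rc := LinearMap.toContinuousLinearMap R
  refine ⟨‖Rc‖, Rc.opNorm_nonneg, fun u => ⟨R (κ' u), ?_, Rc.le_opNorm (κ' u)⟩⟩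
  exact congrArg Subtype.val (LinearMap.congr_fun hR _)

lemma closure_image_inter_preimage_closedBall_subset [FiniteDimensional ℝ P] (A : E →L[ℝ] F)
    (L : E →L[ℝ] P) (𝒴 : Submodule ℝ E) {r δ : ℝ} (hδ : 0 < δ) :
    closure (L '' (𝒴 ∩ A ⁻¹' Metric.closedBall 0 r)) ⊆
      L '' (𝒴 ∩ A ⁻¹' Metric.closedBall 0 (r + δ)) := by
  intro p hp
  obtain ⟨ξp, hξp, rfl⟩ : p ∈ 𝒴.map (L : E →ₗ[ℝ] P) := by
    refine closure_minimal ?_ (Submodule.closed_of_finiteDimensional _) hp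
    rintro _ ⟨ξ, hξ, rfl⟩
    exact Submodule.mem_map_of_mem hξ.1
  obtain ⟨C, hC, hlift⟩ := exists_preimage_norm_le_of_finiteDimensional (L.comp 𝒴.subtypeL)
  obtain ⟨_, ⟨ξ₀, hξ₀, rfl⟩, hdist⟩ :=
    Metric.mem_closure_iff.1 hp (δ / (‖A‖ * C + 1)) (by positivity)
  obtain ⟨η, hLη, hη⟩ := hlift ⟨ξp - ξ₀, 𝒴.sub_mem hξp hξ₀.1⟩
  simp only [ContinuousLinearMap.comp_apply, Submodule.subtypeL_apply, map_sub] at hLη hη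
  refine ⟨ξ₀ + η, ⟨𝒴.add_mem hξ₀.1 η.2, ?_⟩, by rw [map_add, hLη, add_sub_cancel]; rfl⟩
  have hAη : ‖A η‖ ≤ δ :=
    calc ‖A η‖ ≤ ‖A‖ * (C * ‖L ξp - L ξ₀‖) :=
          (A.le_opNorm _).trans (mul_le_mul_of_nonneg_left hη (norm_nonneg _))
      _ ≤ (‖A‖ * C + 1) * (δ / (‖A‖ * C + 1)) := by
          rw [← mul_assoc, ← dist_eq_norm]
          gcongr
          · linarith
          · exact hdist.le
      _ = δ := mul_div_cancel₀ _ (by positivity)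
  have hAξ₀ : ‖A ξ₀‖ ≤ r := mem_closedBall_zero_iff.1 hξ₀.2
  simpa using (norm_add_le _ _).trans (add_le_add hAξ₀ hAη)

end Closure

section Norming

variable {X Z V : Type*} [NormedAddCommGroup X] [NormedSpace ℝ X]
  [NormedAddCommGroup Z] [NormedSpace ℝ Z] [NormedAddCommGroup V] [NormedSpace ℝ V]
  [FiniteDimensional ℝ V]

/-- `t` is a preimage of a fine net of the totally bounded set `κ(B_X)`. -/
lemma exists_finset_norm_le_of_ker_le (κ : X →L[ℝ] V) {δ : ℝ} (hδ : 0 < δ) :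
    ∃ t : Finset X, (∀ w ∈ t, ‖w‖ ≤ 1) ∧ ∀ T : X →L[ℝ] Z, (∀ u, κ u = 0 → T u = 0) →
      ∀ N, (∀ w ∈ t, ‖T w‖ ≤ N) → ‖T‖ ≤ (1 + δ) * N := by
  obtain ⟨C, hC, hlift⟩ := exists_preimage_norm_le_of_finiteDimensional κ
  set δ' := δ / ((1 + δ) * (C + 1))
  have hδ' : 0 < δ' := by positivity
  have hCδ' : C * δ' ≤ δ / (1 + δ) := by
    have : C * δ' = δ / (1 + δ) * (C / (C + 1)) := by simp only [δ']; field_simp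
    rw [this]
    exact mul_le_of_le_one_right (by positivity) ((div_le_one (by positivity)).2 (by linarith))
  have hK : TotallyBounded (κ '' Metric.closedBall 0 1) :=
    (κ.lipschitz.isBounded_image Metric.isBounded_closedBall).isCompact_closure.totallyBounded
      |>.subset subset_closure
  obtain ⟨t, ht1, htfin, hcover⟩ := Set.exists_subset_image_finite_and.1
    (Metric.finite_approx_of_totallyBounded hK δ' hδ')
  refine ⟨htfin.toFinset, fun w hw => mem_closedBall_zero_iff.1 (ht1 (htfin.mem_toFinset.1 hw)),
    fun T hT N hN => ?_⟩
  have hTu : ∀ u : X, ‖u‖ ≤ 1 → ‖T u‖ ≤ N + δ / (1 + δ) * ‖T‖ := by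
    intro u hu
    obtain ⟨_, ⟨w, hw, rfl⟩, hdist⟩ := Set.mem_iUnion₂.1
      (hcover ⟨u, mem_closedBall_zero_iff.2 hu, rfl⟩)
    obtain ⟨u', hu'κ, hu'⟩ := hlift (u - w)
    have hTu' : T (u - w) = T u' := by
      rw [← sub_eq_zero, ← map_sub]
      exact hT _ (by rw [map_sub, hu'κ, sub_self])
    have hκ : ‖κ (u - w)‖ ≤ δ' := by
      rw [map_sub, ← dist_eq_norm]
      exact (Metric.mem_ball.1 hdist).le
    calc ‖T u‖ = ‖T w + T u'‖ := by rw [← hTu', map_sub, add_sub_cancel]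
      _ ≤ N + ‖T‖ * (C * δ') := by
          refine (norm_add_le _ _).trans (add_le_add (hN w (htfin.mem_toFinset.2 hw)) ?_)
          refine (T.le_opNorm u').trans (mul_le_mul_of_nonneg_left ?_ (norm_nonneg _))
          exact hu'.trans (mul_le_mul_of_nonneg_left hκ hC)
      _ ≤ N + δ / (1 + δ) * ‖T‖ := by
          rw [mul_comm (δ / (1 + δ))]
          gcongr
  have hT1 : ‖T‖ ≤ N + δ / (1 + δ) * ‖T‖ :=
    T.opNorm_le_of_unit_norm (by simpa using hTu 0 (by simp)) fun u hu => hTu u hu.le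
  have h1δ : 0 < 1 + δ := by linarith
  rw [← sub_le_iff_le_add, ← one_sub_mul, one_sub_div h1δ.ne', add_sub_cancel_right,
    div_mul_eq_mul_div, div_le_iff₀ h1δ] at hT1
  linarith

end Norming

section LocalReflexivity

variable {X : Type*} [NormedAddCommGroup X] [NormedSpace ℝ X]
  {ι Λ : Type*} [Fintype ι] [DecidableEq ι] [Fintype Λ] [DecidableEq Λ]
  {g : ι → StrongDual ℝ X} {w : Λ → X} {V : ι → Submodule ℝ X}
  {φ : ι → StrongDual ℝ (StrongDual ℝ X)}

lemma piDualPairing_le_of_le_mul_norm (hw : ∀ k, ‖w k‖ ≤ 1)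
    (hφ : ∀ i, ∀ f ∈ ann (V i), φ i f = 0) (ℓ : StrongDual ℝ (ι → X)) {S : ℝ} (hS0 : 0 ≤ S)
    (hS : ∀ ξ ∈ Submodule.pi Set.univ V, ℓ ξ ≤ S * ‖sumSmulRightAt g w ξ‖) :
    piDualPairing φ ℓ ≤ ‖sumSmulRight g φ‖ * S := by
  obtain ⟨U, hU, hUℓ⟩ := exists_norm_le_comp_eq (sumSmulRightAt g w) _ ℓ hS0 hS
  calc piDualPairing φ ℓ = piDualPairing φ (U.comp (sumSmulRightAt g w)) :=
        piDualPairing_congr hφ fun ξ hξ => (hUℓ ξ hξ).symm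
    _ = piDualPairing (sumSmulRightAt g w φ) U := piDualPairing_comp_sumSmulRightAt g w φ U
    _ ≤ ‖sumSmulRightAt g w φ‖ * ‖U‖ := piDualPairing_le _ U
    _ ≤ ‖sumSmulRight g φ‖ * S :=
        mul_le_mul (norm_sumSmulRightAt_le g hw φ) hU (norm_nonneg _) (norm_nonneg _)

lemma mem_closure_image_of_apply_eq_piDualPairing {P : Type*} [NormedAddCommGroup P]
    [NormedSpace ℝ P] (hw : ∀ k, ‖w k‖ ≤ 1) (hφ : ∀ i, ∀ f ∈ ann (V i), φ i f = 0)
    (L : (ι → X) →L[ℝ] P) {p₀ : P} (hp₀ : ∀ ψ : StrongDual ℝ P, ψ p₀ = piDualPairing φ (ψ.comp L))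
    {δ : ℝ} (hδ : 0 < δ) :
    p₀ ∈ closure (L '' (Submodule.pi Set.univ V ∩
      sumSmulRightAt g w ⁻¹' Metric.closedBall 0 (‖sumSmulRight g φ‖ + δ))) := by
  set ρ := ‖sumSmulRight g φ‖
  have hρδ : 0 < ρ + δ := by positivity
  by_contra hp
  have hK : Convex ℝ ((Submodule.pi Set.univ V : Set (ι → X)) ∩
      sumSmulRightAt g w ⁻¹' Metric.closedBall 0 (ρ + δ)) :=
    (Submodule.pi Set.univ V).convex.inter
      ((convex_closedBall _ _).is_linear_preimage (sumSmulRightAt g w).toLinearMap.isLinear)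
  obtain ⟨ψ, u, hψ, hu⟩ := geometric_hahn_banach_closed_point
    (hK.linear_image L.toLinearMap).closure isClosed_closure hp
  have hlt : ∀ ξ ∈ Submodule.pi Set.univ V, ‖sumSmulRightAt g w ξ‖ ≤ ρ + δ → ψ.comp L ξ < u :=
    fun ξ hξ hA => hψ _ (subset_closure ⟨ξ, ⟨hξ, mem_closedBall_zero_iff.2 hA⟩, rfl⟩)
  have hu0 : 0 < u := by simpa using hlt 0 (zero_mem _) (by simpa using hρδ.le)
  have hpair := piDualPairing_le_of_le_mul_norm hw hφ (ψ.comp L) (by positivity)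
    (le_div_mul_norm_of_lt _ _ _ hρδ hlt)
  rw [← hp₀] at hpair
  have : ρ * (u / (ρ + δ)) ≤ u := by
    rw [mul_div_assoc', div_le_iff₀ hρδ]
    nlinarith
  linarith

end LocalReflexivity

/-- A principle of local reflexivity; `hφ` says that `φ i` lies in the weak*-closure of `V i`. -/
theorem exists_lift_sumSmulRight_norm_le {X : Type*} [NormedAddCommGroup X] [NormedSpace ℝ X]
    {ι : Type*} [Fintype ι] (g : ι → StrongDual ℝ X) (V : ι → Submodule ℝ X)
    (φ : ι → StrongDual ℝ (StrongDual ℝ X)) (hφ : ∀ i, ∀ f ∈ ann (V i), φ i f = 0)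
    (M : Submodule ℝ (StrongDual ℝ X)) [FiniteDimensional ℝ M] {ε : ℝ} (hε : 0 < ε) :
    ∃ x : ι → X, (∀ i, x i ∈ V i) ∧ (∀ i, ∀ f ∈ M, f (x i) = φ i f) ∧
      ‖sumSmulRight g x‖ ≤ ‖sumSmulRight g φ‖ + ε := by
  classical
  set ρ := ‖sumSmulRight g φ‖
  have hρ : 0 ≤ ρ := norm_nonneg _
  obtain ⟨η, hη, hηε⟩ : ∃ η > 0, (1 + η) * (ρ + η) ≤ ρ + ε := by
    set m := min 1 (ε / (ρ + 2))
    have hm : 0 < m := by positivity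
    have h1 : m ≤ 1 := min_le_left _ _
    have h2 : m * (ρ + 2) ≤ ε := (le_div_iff₀ (by positivity)).1 (min_le_right _ _)
    exact ⟨m, hm, by nlinarith [mul_le_mul_of_nonneg_left h1 hm.le]⟩
  obtain ⟨t, ht1, hnet⟩ := exists_finset_norm_le_of_ker_le (Z := X) (ContinuousLinearMap.pi g) hη
  have := Module.Free.of_divisionRing ℝ M
  let b := Module.finBasis ℝ M
  let L := ContinuousLinearMap.piMap fun _ : ι =>
    ContinuousLinearMap.pi fun j => (b j : StrongDual ℝ X)
  let w : t → X := fun k => k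
  let A := sumSmulRightAt (Z := X) g w
  obtain ⟨x, ⟨hxV, hxA⟩, hLx⟩ := closure_image_inter_preimage_closedBall_subset A L _ (half_pos hη)
    (mem_closure_image_of_apply_eq_piDualPairing (w := w) (fun k => ht1 k k.2) hφ L
      (fun ψ => apply_eq_piDualPairing φ _ ψ) (half_pos hη))
  refine ⟨x, fun i => Submodule.mem_pi.1 hxV i trivial, fun i f hf => ?_, ?_⟩
  · have hb : ((inclusionInDoubleDual ℝ X (x i)).toLinearMap ∘ₗ M.subtype) =
        (φ i).toLinearMap ∘ₗ M.subtype :=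
      b.ext fun j => by simpa [L] using congrFun (congrFun hLx i) j
    simpa using LinearMap.congr_fun hb ⟨f, hf⟩
  · refine (hnet _ (fun u hu => ?_) _ fun w hw => ?_).trans hηε
    · have hgu : ∀ i, g i u = 0 := fun i => congrFun hu i
      simp [hgu]
    · have := (norm_le_pi_norm (A x) ⟨w, hw⟩).trans (mem_closedBall_zero_iff.1 hxA)
      simp only [A, sumSmulRightAt_apply] at this
      linarith

theorem exists_lift_sumSmulRight_of_ann {X : Type*} [NormedAddCommGroup X] [NormedSpace ℝ X]
    {ι : Type*} [Fintype ι] (Y : Submodule ℝ X) (g : ι → StrongDual ℝ X)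
    (φ : ι → StrongDual ℝ (StrongDual ℝ X)) (hgφ : ∀ i, g i ∈ ann Y ∨ ∀ f ∈ ann Y, φ i f = 0)
    (M : Submodule ℝ (StrongDual ℝ X)) [FiniteDimensional ℝ M] {ε : ℝ} (hε : 0 < ε) :
    ∃ x : ι → X, (∀ i, g i ∈ ann Y ∨ x i ∈ Y) ∧ (∀ i, ∀ f ∈ M, f (x i) = φ i f) ∧
      ‖sumSmulRight g x‖ ≤ ‖sumSmulRight g φ‖ + ε := by
  classical
  let V i := if g i ∈ ann Y then ⊤ else Y
  have hφV : ∀ i, ∀ f ∈ ann (V i), φ i f = 0 := by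
    intro i f hf
    by_cases hgi : g i ∈ ann Y
    · have hf0 : f = 0 := ContinuousLinearMap.ext fun v => hf v (by simp [V, hgi])
      rw [hf0, map_zero]
    · exact (hgφ i).resolve_left hgi f (by simpa [V, hgi] using hf)
  obtain ⟨x, hxV, hxM, hxnorm⟩ := exists_lift_sumSmulRight_norm_le g V φ hφV M hε
  refine ⟨x, fun i => ?_, hxM, hxnorm⟩
  by_cases hgi : g i ∈ ann Y
  exacts [Or.inl hgi, Or.inr (by simpa [V, hgi] using hxV i)]

section Expansion

variable {Z : Type*} [NormedAddCommGroup Z] [NormedSpace ℝ Z]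

lemma norm_dualOp_le (Q : Z →L[ℝ] Z) : ‖dualOp Q‖ ≤ ‖Q‖ :=
  ContinuousLinearMap.opNorm_le_bound _ (norm_nonneg _) fun f =>
    (f.opNorm_comp_le Q).trans_eq (mul_comm _ _)

lemma norm_sumSmulRight_le_of_expansion {ι : Type*} [Fintype ι] {g : ι → StrongDual ℝ Z}
    {φ : ι → StrongDual ℝ (StrongDual ℝ Z)} (Q : StrongDual ℝ Z →L[ℝ] StrongDual ℝ Z)
    (hQ : ∀ f, Q f = ∑ i, φ i f • g i) : ‖sumSmulRight g φ‖ ≤ ‖Q‖ := by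
  have : sumSmulRight g φ = (dualOp Q).comp (inclusionInDoubleDual ℝ Z) := by
    ext v f
    simp [dualOp, hQ, mul_comm]
  rw [this]
  exact (ContinuousLinearMap.opNorm_comp_le _ _).trans
    (mul_le_of_le_one_right (norm_nonneg _) (inclusionInDoubleDual_norm_le ℝ Z)) |>.trans
    (norm_dualOp_le Q)

/-- The `g i` form a basis of `range Q` extending one of `range Q ∩ W`. -/
lemma exists_expansion_adapted (Q : Z →L[ℝ] Z) (hQ : FinRank Q) (W : Submodule ℝ Z)
    (hQW : ∀ w ∈ W, Q w ∈ W) :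
    ∃ (ι : Type) (_ : Fintype ι) (g : ι → Z) (φ : ι → StrongDual ℝ Z),
      (∀ i, g i ∈ LinearMap.range (Q : Z →ₗ[ℝ] Z)) ∧ (∀ z, Q z = ∑ i, φ i z • g i) ∧
      ∀ i, g i ∈ W ∨ ∀ w ∈ W, φ i w = 0 := by
  set G := LinearMap.range (Q : Z →ₗ[ℝ] Z)
  have : FiniteDimensional ℝ G := hQ
  let G₀ : Submodule ℝ G := W.comap G.subtype
  obtain ⟨G₁, hcompl⟩ := Submodule.exists_isCompl G₀
  let b := ((Module.finBasis ℝ G₀).prod (Module.finBasis ℝ G₁)).map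
    (Submodule.prodEquivOfIsCompl G₀ G₁ hcompl)
  let Q' : Z →L[ℝ] G := Q.codRestrict G fun z => LinearMap.mem_range_self _ z
  let φ i : StrongDual ℝ Z := (LinearMap.toContinuousLinearMap (b.coord i)).comp Q'
  refine ⟨_, inferInstance, fun i => b i, φ, fun i => (b i).2, fun z => ?_, ?_⟩
  · rw [show Q z = ((Q' z : G) : Z) from rfl, ← b.sum_repr (Q' z), Submodule.coe_sum]
    rfl
  · rintro (i | i)
    · left
      simp only [b, Module.Basis.map_apply, Module.Basis.prod_apply, Sum.elim_inl,
        LinearMap.coe_inl, Function.comp_apply, Submodule.coe_prodEquivOfIsCompl',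
        ZeroMemClass.coe_zero, add_zero]
      exact (Module.finBasis ℝ G₀ i).2
    · right
      intro w hw
      have hmem : Q' w ∈ G₀ := hQW w hw
      simp [φ, b, (Submodule.projectionOnto_apply_eq_zero_iff _).2 hmem]

end Expansion

theorem pi_pair_dual_gives_conjugate_projections_general
    (X : Type*) [NormedAddCommGroup X] [NormedSpace ℝ X]
    (Y : Submodule ℝ X)
    (lam : ℝ) (h : HasPiPair lam (ann Y))
    (F : Submodule ℝ (StrongDual ℝ X)) (hF : FiniteDimensional ℝ F)
    (ε : ℝ) (hε : 0 < ε) :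
    ∃ P : X →L[ℝ] X, FinRank P ∧ (∀ x, P (P x) = P x) ∧ (∀ y ∈ Y, P y ∈ Y) ∧
      ‖P‖ ≤ lam + ε ∧ ∀ f ∈ F, dualOp P f = f := by
  obtain ⟨Q, hQfin, hQQ, hQY, hQnorm, hQF⟩ := h F hF (ε / 2) (half_pos hε)
  obtain ⟨ι, _, g, φ, hgQ, hQ, hgφ⟩ := exists_expansion_adapted Q hQfin (ann Y) hQY
  set G := LinearMap.range (Q : StrongDual ℝ X →ₗ[ℝ] StrongDual ℝ X)
  have : FiniteDimensional ℝ G := hQfin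
  obtain ⟨x, hxY, hxφ, hxnorm⟩ := exists_lift_sumSmulRight_of_ann Y g φ hgφ (G ⊔ F) (half_pos hε)
  have hPQ : ∀ f ∈ G ⊔ F, dualOp (sumSmulRight g x) f = Q f := fun f hf => by
    rw [dualOp_sumSmulRight_apply, hQ]
    simp [hxφ _ f hf]
  have hQg : ∀ i, Q (g i) = g i := fun i => by
    obtain ⟨f, hf⟩ := hgQ i
    rw [← hf]
    exact hQQ f
  refine ⟨sumSmulRight g x, finRank_sumSmulRight g x, sumSmulRight_idem fun i v => ?_,
    fun y hy => sumSmulRight_mem hxY hy, ?_,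
    fun f hf => (hPQ f (Submodule.mem_sup_right hf)).trans (hQF f hf)⟩
  · exact congrArg (· v) ((hPQ _ (Submodule.mem_sup_left (hgQ i))).trans (hQg i))
  · linarith [norm_sumSmulRight_le_of_expansion Q hQ]

/-- Corollary 4.3: the `π_λ`-property of `(X*, Y^⊥)` gives projections on `X`
whose adjoints fix a given finite-dimensional subspace of `X*`. -/
theorem pi_pair_dual_gives_conjugate_projections
    (X : Type*) [NormedAddCommGroup X] [NormedSpace ℝ X] [CompleteSpace X]
    (Y : Submodule ℝ X) (hY : IsClosed (Y : Set X))
    (lam : ℝ) (h : HasPiPair lam (ann Y))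
    (F : Submodule ℝ (StrongDual ℝ X)) (hF : FiniteDimensional ℝ F)
    (ε : ℝ) (hε : 0 < ε) :
    ∃ P : X →L[ℝ] X, FinRank P ∧ (∀ x, P (P x) = P x) ∧ (∀ y ∈ Y, P y ∈ Y) ∧
      ‖P‖ ≤ lam + ε ∧ ∀ f ∈ F, dualOp P f = f :=
  pi_pair_dual_gives_conjugate_projections_general X Y lam h F hF ε hε
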